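/- arXiv:2407.08592 — 3 statements merged into one kernel-verified Lean document; each statement's English description precedes it below -/
import Mathlib

section
/- Let K ≥ 1, let A be an invertible K×K real matrix that is uniformly exponentially stable, and let β be a 1×K row vector. Then the function t ↦ t²·(−β·exp(t•A)·A·𝟙) is integrable on [0,∞) and ∫_0^∞ t²·(−β·exp(t•A)·A·𝟙) dt = 2·β·A⁻²·𝟙. (This is the second moment of a phase-type distribution with density f(t) = −β·exp(t•A)·A·𝟙.) -/
/-!
The density `-β·exp(t•A)·A·𝟙` is `-(d/dt)(β·exp(t•A)·𝟙)`, and each factor `A⁻¹` integrates once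
more: `β·exp(t•A)·A⁻¹·𝟙` and `β·exp(t•A)·A⁻²·𝟙` are primitives of the previous ones. Integrating by
parts twice, all boundary terms at infinity vanish because exponential decay beats polynomial
growth, and only `2·β·A⁻²·𝟙` survives from the boundary at `0`.
-/

open MeasureTheory Matrix

/-- The all-ones column vector. -/
noncomputable def onesCol (K : ℕ) : Matrix (Fin K) (Fin 1) ℝ := Matrix.of fun _ _ => 1

/-- A square matrix `A` is uniformly exponentially stable if `‖exp(t•A)‖ ≤ C·exp(-α·t)`
for all `t ≥ 0` (here in the entrywise sup norm). -/
def UnifExpStable {K : ℕ} (A : Matrix (Fin K) (Fin K) ℝ) : Prop :=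
  ∃ C > (0:ℝ), ∃ α > (0:ℝ), ∀ t ≥ (0:ℝ), ∀ i j,
    |NormedSpace.exp (t • A) i j| ≤ C * Real.exp (-α * t)

open Filter Asymptotics Topology Set

section ExpDecay

theorem isBigO_pow_mul_of_isBigO_exp_neg {f : ℝ → ℝ} {α : ℝ} (hα : 0 < α)
    (hf : f =O[atTop] fun t => Real.exp (-α * t)) (n : ℕ) :
    (fun t => t ^ n * f t) =O[atTop] fun t => Real.exp (-(α / 2) * t) := by
  refine ((isLittleO_pow_exp_pos_mul_atTop n (half_pos hα)).isBigO.mul hf).congr_right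
    fun t => ?_
  rw [← Real.exp_add]
  ring_nf

theorem tendsto_pow_mul_of_isBigO_exp_neg {f : ℝ → ℝ} {α : ℝ} (hα : 0 < α)
    (hf : f =O[atTop] fun t => Real.exp (-α * t)) (n : ℕ) :
    Tendsto (fun t => t ^ n * f t) atTop (𝓝 0) := by
  refine (isBigO_pow_mul_of_isBigO_exp_neg hα hf n).trans_tendsto ?_
  exact Real.tendsto_exp_atBot.comp <|
    tendsto_id.const_mul_atTop_of_neg (neg_lt_zero.2 (half_pos hα))

theorem integrableOn_pow_mul_of_isBigO_exp_neg {f : ℝ → ℝ} {α a : ℝ} (hα : 0 < α)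
    (hcont : ContinuousOn f (Ici a)) (hf : f =O[atTop] fun t => Real.exp (-α * t)) (n : ℕ) :
    IntegrableOn (fun t => t ^ n * f t) (Ioi a) :=
  integrable_of_isBigO_exp_neg (half_pos hα) ((continuousOn_pow n).mul hcont)
    (isBigO_pow_mul_of_isBigO_exp_neg hα hf n)

theorem integral_Ioi_sq_mul_eq_of_hasDerivAt {g₀ g₁ g₂ h : ℝ → ℝ}
    (hg₀ : ∀ t ∈ Ici (0 : ℝ), HasDerivAt g₀ (h t) t)
    (hg₁ : ∀ t ∈ Ici (0 : ℝ), HasDerivAt g₁ (g₀ t) t)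
    (hg₂ : ∀ t ∈ Ici (0 : ℝ), HasDerivAt g₂ (g₁ t) t)
    (hint : IntegrableOn (fun t => t ^ 2 * h t) (Ioi 0))
    (hlim₀ : Tendsto (fun t => t ^ 2 * g₀ t) atTop (𝓝 0))
    (hlim₁ : Tendsto (fun t => t * g₁ t) atTop (𝓝 0))
    (hlim₂ : Tendsto g₂ atTop (𝓝 0)) :
    ∫ t in Ioi 0, t ^ 2 * h t = -2 * g₂ 0 := by
  have hprim : ∀ t ∈ Ici (0 : ℝ),
      HasDerivAt (fun s => s ^ 2 * g₀ s - 2 * s * g₁ s + 2 * g₂ s) (t ^ 2 * h t) t := by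
    intro t ht
    have hd := (((hasDerivAt_pow 2 t).mul (hg₀ t ht)).sub
      (((hasDerivAt_id t).const_mul 2).mul (hg₁ t ht))).add ((hg₂ t ht).const_mul 2)
    refine hd.congr_deriv ?_
    simp only [id, Nat.cast_ofNat]
    ring
  have hlim : Tendsto (fun s => s ^ 2 * g₀ s - 2 * s * g₁ s + 2 * g₂ s) atTop (𝓝 0) := by
    simpa [mul_assoc] using (hlim₀.sub (hlim₁.const_mul 2)).add (hlim₂.const_mul 2)
  rw [integral_Ioi_of_hasDerivAt_of_tendsto' hprim hint hlim]
  ring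

end ExpDecay

section MatrixCoefficient

variable {m n p : Type*} [Fintype n] [DecidableEq n]

theorem isBigO_mul_exp_smul_mul_apply {A : Matrix n n ℝ} {C α : ℝ}
    (hA : ∀ t ≥ (0 : ℝ), ∀ j l, |NormedSpace.exp (t • A) j l| ≤ C * Real.exp (-α * t))
    (P : Matrix m n ℝ) (Q : Matrix n p ℝ) (i : m) (k : p) :
    (fun t : ℝ => (P * NormedSpace.exp (t • A) * Q) i k) =O[atTop]
      fun t => Real.exp (-α * t) := by
  have hentry : ∀ j l, (fun t : ℝ => NormedSpace.exp (t • A) j l) =O[atTop]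
      fun t => Real.exp (-α * t) := fun j l =>
    IsBigO.of_bound C <| (eventually_ge_atTop 0).mono fun t ht => by
      simpa [Real.norm_eq_abs, abs_of_pos (Real.exp_pos _)] using hA t ht j l
  simp only [Matrix.mul_apply, Finset.sum_mul]
  exact IsBigO.fun_sum fun l _ => IsBigO.fun_sum fun j _ =>
    ((hentry j l).const_mul_left (P i j * Q l k)).congr_left fun t => by ring

-- Any normed-algebra structure gives access to the derivative of `exp`; the statement is norm-free.
attribute [local instance] Matrix.linftyOpNormedRing Matrix.linftyOpNormedAlgebra

theorem hasDerivAt_mul_exp_smul_mul_apply (P : Matrix m n ℝ) (A : Matrix n n ℝ)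
    (Q : Matrix n p ℝ) (i : m) (k : p) (t : ℝ) :
    HasDerivAt (fun s : ℝ => (P * NormedSpace.exp (s • A) * Q) i k)
      ((P * NormedSpace.exp (t • A) * (A * Q)) i k) t := by
  let L : Matrix n n ℝ →ₗ[ℝ] ℝ := entryLinearMap ℝ ℝ i k ∘ₗ mulRightLinearMap m ℝ Q ∘ₗ
    mulLeftLinearMap n ℝ P
  have hL : HasDerivAt (fun s : ℝ => (P * NormedSpace.exp (s • A) * Q) i k)
      ((P * (NormedSpace.exp (t • A) * A) * Q) i k) t :=
    L.toContinuousLinearMap.hasFDerivAt.comp_hasDerivAt t (hasDerivAt_exp_smul_const A t)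
  simpa only [Matrix.mul_assoc] using hL

end MatrixCoefficient

theorem phase_type_second_moment_general (K : ℕ)
    (A : Matrix (Fin K) (Fin K) ℝ) (hA : Invertible A) (hstab : UnifExpStable A)
    (β : Matrix (Fin 1) (Fin K) ℝ) :
    IntegrableOn
      (fun t : ℝ => t ^ 2 * (-(β * NormedSpace.exp (t • A) * A * onesCol K)) 0 0)
      (Set.Ici 0) ∧
    ∫ t in Set.Ici (0:ℝ), t ^ 2 * (-(β * NormedSpace.exp (t • A) * A * onesCol K)) 0 0
      = (2:ℝ) * (β * (A⁻¹ * A⁻¹) * onesCol K) 0 0 := by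
  obtain ⟨C, -, α, hα, hbound⟩ := hstab
  let φ (v : Matrix (Fin K) (Fin 1) ℝ) (t : ℝ) : ℝ := (β * NormedSpace.exp (t • A) * v) 0 0
  have hderiv (v) (t : ℝ) : HasDerivAt (φ v) (φ (A * v) t) t :=
    hasDerivAt_mul_exp_smul_mul_apply β A v 0 0 t
  have hprim (v) (t : ℝ) : HasDerivAt (φ (A⁻¹ * v)) (φ v t) t := by
    simpa only [mul_inv_cancel_left_of_invertible] using hderiv (A⁻¹ * v) t
  have hdecay (v) : φ v =O[atTop] fun t => Real.exp (-α * t) :=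
    isBigO_mul_exp_smul_mul_apply hbound β v 0 0
  have hint : IntegrableOn (fun t => t ^ 2 * φ (A * onesCol K) t) (Ioi 0) :=
    integrableOn_pow_mul_of_isBigO_exp_neg hα
      (fun t _ => (hderiv _ t).continuousAt.continuousWithinAt) (hdecay _) 2
  have hmoment :
      ∫ t in Ioi 0, t ^ 2 * φ (A * onesCol K) t = -2 * φ (A⁻¹ * (A⁻¹ * onesCol K)) 0 :=
    integral_Ioi_sq_mul_eq_of_hasDerivAt (fun t _ => hderiv _ t) (fun t _ => hprim _ t)
      (fun t _ => hprim _ t) hint (tendsto_pow_mul_of_isBigO_exp_neg hα (hdecay _) 2)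
      (by simpa using tendsto_pow_mul_of_isBigO_exp_neg hα (hdecay (A⁻¹ * onesCol K)) 1)
      (by simpa using tendsto_pow_mul_of_isBigO_exp_neg hα (hdecay (A⁻¹ * (A⁻¹ * onesCol K))) 0)
  have hintegrand :
      (fun t : ℝ => t ^ 2 * (-(β * NormedSpace.exp (t • A) * A * onesCol K)) 0 0) =
        fun t => -(t ^ 2 * φ (A * onesCol K) t) := by
    funext t
    simp only [φ, Matrix.neg_apply, Matrix.mul_assoc, mul_neg]
  rw [hintegrand, integrableOn_Ici_iff_integrableOn_Ioi, integral_Ici_eq_integral_Ioi,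
    integral_neg, hmoment]
  refine ⟨hint.neg, ?_⟩
  simp [φ, Matrix.mul_assoc]

/-- Second moment of a phase-type distribution:
`∫₀^∞ t²·(−β·exp(t•A)·A·𝟙) dt = 2·β·A⁻²·𝟙`. -/
theorem phase_type_second_moment (K : ℕ) (hK : 1 ≤ K)
    (A : Matrix (Fin K) (Fin K) ℝ) (hA : Invertible A) (hstab : UnifExpStable A)
    (β : Matrix (Fin 1) (Fin K) ℝ) :
    IntegrableOn
      (fun t : ℝ => t ^ 2 * (-(β * NormedSpace.exp (t • A) * A * onesCol K)) 0 0)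
      (Set.Ici 0) ∧
    ∫ t in Set.Ici (0:ℝ), t ^ 2 * (-(β * NormedSpace.exp (t • A) * A * onesCol K)) 0 0
      = (2:ℝ) * (β * (A⁻¹ * A⁻¹) * onesCol K) 0 0 :=
  phase_type_second_moment_general K A hA hstab β
end

section
/- Let K ≥ 1, let A be an invertible K×K real matrix that is uniformly exponentially stable, let β be a 1×K row vector, and let γ be a real number. Then the function t ↦ t·(−β·exp((t−γ)•A)·A·𝟙) is integrable on [γ,∞) and ∫_{γ}^{∞} (−t·β·exp((t−γ)•A)·A·𝟙) dt = β·(γ·A − I)·A⁻¹·𝟙. (This is the tail first-moment integral I_{1,∞}(β, A, γ) used in the analysis of multi-regime phase-type distributions.) -/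
open MeasureTheory Matrix

/-!
In any real Banach algebra, with `E t = exp ((t - γ) • A)`, the function `E t * (A⁻¹ - t • 1)`
is a primitive of `-(t • (E t * A))`. Exponential decay of `E` makes `t • E t` decay
exponentially too, so the improper integral converges and the primitive vanishes at infinity;
the fundamental theorem of calculus then gives `∫_γ^∞ t • (E t * A) dt = A⁻¹ - γ • 1`. The
scalar identity is the image of this one under the continuous linear functional `M ↦ β M 𝟙`.
-/

open Filter Topology Asymptotics Set NormedSpace

section BanachAlgebra

variable {𝔸 : Type*} [NormedRing 𝔸] [NormedAlgebra ℝ 𝔸] {A : 𝔸} {α : ℝ}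

theorem isBigO_exp_sub_smul_mul
    (hdecay : (fun t : ℝ => exp (t • A)) =O[atTop] fun t => Real.exp (-α * t)) (γ : ℝ) (B : 𝔸) :
    (fun t : ℝ => exp ((t - γ) • A) * B) =O[atTop] fun t => Real.exp (-α * t) := by
  have hshift : (fun t : ℝ => exp ((t - γ) • A)) =O[atTop] fun t => Real.exp (-α * t) := by
    refine (hdecay.comp_tendsto (tendsto_atTop_add_const_right _ (-γ) tendsto_id)).trans ?_
    refine Real.isBigO_exp_comp_exp_comp.2 <|
      (isBoundedUnder_const (a := α * γ)).mono_le (Eventually.of_forall fun t => ?_)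
    simp only [Pi.sub_apply, id_eq]
    linarith
  refine (isBigO_of_le' (c := ‖B‖) _ fun t => ?_).trans hshift
  exact (norm_mul_le _ _).trans_eq (mul_comm _ _)

theorem isBigO_smul_exp_sub_smul_mul (hα : 0 < α)
    (hdecay : (fun t : ℝ => exp (t • A)) =O[atTop] fun t => Real.exp (-α * t)) (γ : ℝ) (B : 𝔸) :
    (fun t : ℝ => t • (exp ((t - γ) • A) * B)) =O[atTop] fun t => Real.exp (-(α / 2) * t) := by
  refine ((isLittleO_pow_exp_pos_mul_atTop 1 (half_pos hα)).isBigO.smul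
    (isBigO_exp_sub_smul_mul hdecay γ B)).congr (fun t => by simp) fun t => ?_
  rw [smul_eq_mul, ← Real.exp_add]
  ring_nf

theorem tendsto_exp_sub_smul_mul_invOf_sub_smul_one (hα : 0 < α)
    (hdecay : (fun t : ℝ => exp (t • A)) =O[atTop] fun t => Real.exp (-α * t)) (γ : ℝ)
    [Invertible A] :
    Tendsto (fun t : ℝ => exp ((t - γ) • A) * (⅟A - t • 1)) atTop (𝓝 0) := by
  have hexp {c : ℝ} (hc : 0 < c) : Tendsto (fun t : ℝ => Real.exp (-c * t)) atTop (𝓝 0) :=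
    Real.tendsto_exp_atBot.comp (tendsto_id.const_mul_atTop_of_neg (neg_neg_iff_pos.2 hc))
  have h := ((isBigO_exp_sub_smul_mul hdecay γ ⅟A).trans_tendsto (hexp hα)).sub
    ((isBigO_smul_exp_sub_smul_mul hα hdecay γ 1).trans_tendsto (hexp (half_pos hα)))
  simpa only [mul_sub, mul_smul_comm, sub_zero] using h

variable [CompleteSpace 𝔸]

theorem hasDerivAt_exp_sub_smul (A : 𝔸) (γ t : ℝ) :
    HasDerivAt (fun u : ℝ => exp ((u - γ) • A)) (exp ((t - γ) • A) * A) t := by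
  have h := (hasDerivAt_exp_smul_const A (t - γ)).scomp t ((hasDerivAt_id t).sub_const γ)
  rwa [one_smul] at h

theorem hasDerivAt_exp_sub_smul_mul_invOf_sub_smul_one (A : 𝔸) [Invertible A] (γ t : ℝ) :
    HasDerivAt (fun u : ℝ => exp ((u - γ) • A) * (⅟A - u • 1))
      (-(t • (exp ((t - γ) • A) * A))) t := by
  refine ((hasDerivAt_exp_sub_smul A γ t).mul
    (((hasDerivAt_id t).smul_const (1 : 𝔸)).const_sub ⅟A)).congr_deriv ?_
  simp only [mul_sub, mul_assoc, mul_invOf_self, mul_one, mul_smul_comm, one_smul, mul_neg, id_eq]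
  abel

theorem integrableOn_smul_exp_sub_smul_mul (hα : 0 < α)
    (hdecay : (fun t : ℝ => exp (t • A)) =O[atTop] fun t => Real.exp (-α * t)) (γ : ℝ) (B : 𝔸) :
    IntegrableOn (fun t : ℝ => t • (exp ((t - γ) • A) * B)) (Ioi γ) := by
  have hcont : Continuous fun t : ℝ => t • (exp ((t - γ) • A) * B) :=
    continuous_id.smul <| (continuous_iff_continuousAt.2 fun t =>
      (hasDerivAt_exp_sub_smul A γ t).continuousAt).mul continuous_const
  exact (integrableOn_Ici_iff_integrableOn_Ioi).1 <|
    (hcont.continuousOn.locallyIntegrableOn measurableSet_Ici).integrableOn_of_isBigO_atTop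
      (isBigO_smul_exp_sub_smul_mul hα hdecay γ B)
      ⟨Ioi 0, Ioi_mem_atTop 0, exp_neg_integrableOn_Ioi 0 (half_pos hα)⟩

theorem integral_Ioi_smul_exp_sub_smul_mul_self (hα : 0 < α)
    (hdecay : (fun t : ℝ => exp (t • A)) =O[atTop] fun t => Real.exp (-α * t)) (γ : ℝ)
    [Invertible A] :
    ∫ t in Ioi γ, t • (exp ((t - γ) • A) * A) = ⅟A - γ • 1 := by
  have hftc := integral_Ioi_of_hasDerivAt_of_tendsto
    (hasDerivAt_exp_sub_smul_mul_invOf_sub_smul_one A γ γ).continuousAt.continuousWithinAt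
    (fun t _ => hasDerivAt_exp_sub_smul_mul_invOf_sub_smul_one A γ t)
    (integrableOn_smul_exp_sub_smul_mul hα hdecay γ A).neg
    (tendsto_exp_sub_smul_mul_invOf_sub_smul_one hα hdecay γ)
  rw [integral_neg, sub_self, zero_smul, exp_zero, one_mul, zero_sub, neg_inj] at hftc
  exact hftc

end BanachAlgebra

section Matrix

-- The Banach-algebra lemmas need a submultiplicative norm; the entrywise bounds of `UnifExpStable` transfer to
-- the `L∞` operator norm at the cost of a factor `K`.
attribute [local instance] Matrix.linftyOpNormedAddCommGroup Matrix.linftyOpNormedRing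
  Matrix.linftyOpNormedAlgebra

theorem Matrix.linfty_opNorm_le_card_mul {m n : Type*} [Fintype m] [Fintype n]
    {M : Matrix m n ℝ} {b : ℝ} (hb : 0 ≤ b) (h : ∀ i j, |M i j| ≤ b) :
    ‖M‖ ≤ Fintype.card n * b := by
  lift b to NNReal using hb
  rw [linfty_opNorm_def, ← NNReal.coe_natCast, ← NNReal.coe_mul, NNReal.coe_le_coe]
  refine Finset.sup_le fun i _ => ?_
  calc ∑ j, ‖M i j‖₊ ≤ ∑ _j : n, b := Finset.sum_le_sum fun j _ => ?_
    _ = Fintype.card n * b := by simp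
  rw [← NNReal.coe_le_coe, coe_nnnorm, Real.norm_eq_abs]
  exact h i j

theorem UnifExpStable.isBigO_exp_smul {K : ℕ} {A : Matrix (Fin K) (Fin K) ℝ}
    (hA : UnifExpStable A) :
    ∃ α > 0, (fun t : ℝ => exp (t • A)) =O[atTop] fun t => Real.exp (-α * t) := by
  obtain ⟨C, hC, α, hα, hbound⟩ := hA
  refine ⟨α, hα, IsBigO.of_bound (K * C) ?_⟩
  filter_upwards [eventually_ge_atTop 0] with t ht
  rw [Real.norm_of_nonneg (Real.exp_pos _).le, mul_assoc]
  simpa using linfty_opNorm_le_card_mul (by positivity) (hbound t ht)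

noncomputable def rowMulMulCol {n : Type*} [Fintype n] (β : Matrix (Fin 1) n ℝ)
    (c : Matrix n (Fin 1) ℝ) : Matrix n n ℝ →L[ℝ] ℝ :=
  LinearMap.toContinuousLinearMap
    { toFun M := (β * M * c) 0 0
      map_add' M N := by simp [Matrix.mul_add, Matrix.add_mul]
      map_smul' r M := by simp [Matrix.mul_smul, Matrix.smul_mul] }

@[simp]
theorem rowMulMulCol_apply {n : Type*} [Fintype n] (β : Matrix (Fin 1) n ℝ)
    (c : Matrix n (Fin 1) ℝ) (M : Matrix n n ℝ) : rowMulMulCol β c M = (β * M * c) 0 0 :=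
  rfl

theorem mrph_I1_inf_general (K : ℕ)
    (A : Matrix (Fin K) (Fin K) ℝ) (hA : Invertible A) (hstab : UnifExpStable A)
    (β : Matrix (Fin 1) (Fin K) ℝ) (γ : ℝ) :
    IntegrableOn
      (fun t : ℝ => t * (-(β * NormedSpace.exp ((t - γ) • A) * A * onesCol K)) 0 0)
      (Set.Ici γ) ∧
    ∫ t in Set.Ici γ, t * (-(β * NormedSpace.exp ((t - γ) • A) * A * onesCol K)) 0 0
      = (β * (γ • A - (1 : Matrix (Fin K) (Fin K) ℝ)) * A⁻¹ * onesCol K) 0 0 := by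
  obtain ⟨α, hα, hdecay⟩ := hstab.isBigO_exp_smul
  set L := rowMulMulCol β (onesCol K)
  have hintegrand : (fun t : ℝ => t * (-(β * exp ((t - γ) • A) * A * onesCol K)) 0 0) =
      fun t => -L (t • (exp ((t - γ) • A) * A)) := by
    funext t
    simp [L, Matrix.mul_assoc]
  have hint := integrableOn_smul_exp_sub_smul_mul hα hdecay γ A
  rw [hintegrand, integrableOn_Ici_iff_integrableOn_Ioi, integral_Ici_eq_integral_Ioi]
  refine ⟨(L.integrable_comp hint).neg, ?_⟩
  have hcomm : ∫ t in Ioi γ, L (t • (exp ((t - γ) • A) * A)) = L (⅟A - γ • 1) := by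
    rw [← integral_Ioi_smul_exp_sub_smul_mul_self hα hdecay γ]
    exact L.integral_comp_comm hint
  rw [integral_neg, hcomm, invOf_eq_nonsing_inv, rowMulMulCol_apply]
  simp [Matrix.sub_mul, Matrix.mul_sub, Matrix.smul_mul, Matrix.mul_assoc]

/-- The tail first-moment integral `I_{1,∞}(β, A, γ)` of a multi-regime phase-type
distribution. -/
theorem mrph_I1_inf (K : ℕ) (hK : 1 ≤ K)
    (A : Matrix (Fin K) (Fin K) ℝ) (hA : Invertible A) (hstab : UnifExpStable A)
    (β : Matrix (Fin 1) (Fin K) ℝ) (γ : ℝ) :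
    IntegrableOn
      (fun t : ℝ => t * (-(β * NormedSpace.exp ((t - γ) • A) * A * onesCol K)) 0 0)
      (Set.Ici γ) ∧
    ∫ t in Set.Ici γ, t * (-(β * NormedSpace.exp ((t - γ) • A) * A * onesCol K)) 0 0
      = (β * (γ • A - (1 : Matrix (Fin K) (Fin K) ℝ)) * A⁻¹ * onesCol K) 0 0 :=
  mrph_I1_inf_general K A hA hstab β γ

end Matrix
end

section
/- Let N ≥ 2 be an integer, let σ > 0, μ > 0, and τ ≥ 0 be real numbers, and set K = N−1. Let A₁ = −(N·σ/(N−1))·(I − (1/N)·J_K) and A₂ = A₁ − μ·I (both are invertible K×K matrices), and let β₁ = (1/(N−1))·𝟙ᵀ. Then the expected out-of-sync duration of a cycle for the single-threshold policy on a symmetric N-state source satisfies β₁·exp(τ•A₁)·(A₁⁻¹ − A₂⁻¹)·𝟙 − β₁·A₁⁻¹·𝟙 = (1 − e^{−σ·τ/(N−1)})·(N−1)/σ + e^{−σ·τ/(N−1)}·(N−1)/(σ + μ·(N−1)). -/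
open Matrix

/-- The all-ones row vector. -/
noncomputable def onesRow (K : ℕ) : Matrix (Fin 1) (Fin K) ℝ := Matrix.of fun _ _ => 1

/-- The all-ones square matrix. -/
noncomputable def onesMat (K : ℕ) : Matrix (Fin K) (Fin K) ℝ := Matrix.of fun _ _ => 1

/-!
The all-ones vector `𝟙` is a common eigenvector. Both `A₁` and `A₂` have the form
`c • I + d • J` with `J * 𝟙 = K • 𝟙`, so `A₁ * 𝟙 = -(σ/(N-1)) • 𝟙` and
`A₂ * 𝟙 = -(σ/(N-1) + μ) • 𝟙`; consequently `exp (τ • A₁)`, `A₁⁻¹` and `A₂⁻¹` act on `𝟙` by the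
corresponding scalars, and `β₁ * 𝟙 = 1` turns the left-hand side into scalar arithmetic.
Invertibility comes from `J * J = K • J`, which gives `c • I + d • J` the explicit inverse
`c⁻¹ • (I - (d / (c + d * K)) • J)` whenever `c ≠ 0` and `c + d * K ≠ 0`.
-/

namespace Matrix

variable {m n : Type*} [Fintype m] [DecidableEq m]

theorem exp_mul_of_mul_eq_smul [Fintype n] {M : Matrix m m ℝ} {v : Matrix m n ℝ} {c : ℝ}
    (h : M * v = c • v) : NormedSpace.exp M * v = Real.exp c • v := by
  -- any submultiplicative norm will do to sum the exponential series; its topology is the usual one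
  let _ := Matrix.linftyOpNormedRing (n := m) (α := ℝ)
  let _ := Matrix.linftyOpNormedAlgebra (n := m) (R := ℝ) (α := ℝ)
  have hpow : ∀ k : ℕ, M ^ k * v = c ^ k • v := by
    intro k
    induction k with
    | zero => simp
    | succ k ih => rw [pow_succ, pow_succ', Matrix.mul_assoc, h, Matrix.mul_smul, ih, smul_smul]
  have hseries := (NormedSpace.exp_series_hasSum_exp' (𝕂 := ℝ) M).mapL
    (mulRightLinearMap m ℝ v).toContinuousLinearMap
  have hscalar := (NormedSpace.exp_series_hasSum_exp' (𝕂 := ℝ) c).smul_const v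
  rw [← Real.exp_eq_exp_ℝ] at hscalar
  refine hseries.unique ?_
  simpa [Matrix.smul_mul, hpow, smul_smul] using hscalar

variable {𝕜 : Type*} [Field 𝕜]

theorem inv_mul_of_mul_eq_smul {A : Matrix m m 𝕜} {v : Matrix m n 𝕜} {c : 𝕜} (hA : IsUnit A)
    (h : A * v = c • v) : A⁻¹ * v = c⁻¹ • v := by
  have hv : c • (A⁻¹ * v) = v := by
    rw [← Matrix.mul_smul, ← h, ← Matrix.mul_assoc,
      nonsing_inv_mul _ ((isUnit_iff_isUnit_det A).mp hA), Matrix.one_mul]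
  -- for `c = 0` both sides vanish: invertibility forces `v = 0`, and `0⁻¹ = 0`
  rcases eq_or_ne c 0 with rfl | hc
  · simp only [zero_smul] at hv
    simp [← hv]
  · exact (eq_inv_smul_iff₀ hc).mpr hv

end Matrix

section AllOnes

variable {K : ℕ}

theorem onesMat_mul_onesCol : onesMat K * onesCol K = (K : ℝ) • onesCol K := by
  ext; simp [onesMat, onesCol, Matrix.mul_apply]

theorem onesMat_mul_onesMat : onesMat K * onesMat K = (K : ℝ) • onesMat K := by
  ext; simp [onesMat, Matrix.mul_apply]

theorem onesRow_mul_onesCol :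
    onesRow K * onesCol K = (K : ℝ) • (1 : Matrix (Fin 1) (Fin 1) ℝ) := by
  ext i j; fin_cases i; fin_cases j; simp [onesRow, onesCol, Matrix.mul_apply]

variable {c d : ℝ}

theorem smul_one_add_smul_onesMat_mul_onesCol :
    (c • 1 + d • onesMat K) * onesCol K = (c + d * K) • onesCol K := by
  rw [Matrix.add_mul, Matrix.smul_mul, Matrix.smul_mul, Matrix.one_mul, onesMat_mul_onesCol,
    smul_smul, add_smul]

theorem smul_one_add_smul_onesMat_mul_inv (hc : c ≠ 0) (hcd : c + d * K ≠ 0) :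
    (c • 1 + d • onesMat K) * (c⁻¹ • (1 - (d / (c + d * K)) • onesMat K)) = 1 := by
  simp only [Matrix.mul_smul, Matrix.mul_sub, Matrix.add_mul, Matrix.smul_mul, Matrix.mul_one,
    Matrix.one_mul, onesMat_mul_onesMat, smul_smul, smul_sub, smul_add]
  match_scalars <;> field_simp
  ring

theorem isUnit_smul_one_add_smul_onesMat (hc : c ≠ 0) (hcd : c + d * K ≠ 0) :
    IsUnit (c • 1 + d • onesMat K) :=
  .of_mul_eq_one _ (smul_one_add_smul_onesMat_mul_inv hc hcd)

end AllOnes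

theorem Matrix.exp_inv_sub_inv_entry_of_mul_eq_smul {m : Type*} [Fintype m] [DecidableEq m]
    {A₁ A₂ : Matrix m m ℝ} {β : Matrix (Fin 1) m ℝ} {v : Matrix m (Fin 1) ℝ} {l₁ l₂ : ℝ}
    (τ : ℝ) (hA₁ : IsUnit A₁) (hA₂ : IsUnit A₂) (hv₁ : A₁ * v = l₁ • v) (hv₂ : A₂ * v = l₂ • v)
    (hβ : β * v = 1) :
    (β * NormedSpace.exp (τ • A₁) * (A₁⁻¹ - A₂⁻¹) * v) 0 0 - (β * A₁⁻¹ * v) 0 0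
      = (l₁⁻¹ - l₂⁻¹) * Real.exp (τ * l₁) - l₁⁻¹ := by
  have hexp : NormedSpace.exp (τ • A₁) * v = Real.exp (τ * l₁) • v :=
    exp_mul_of_mul_eq_smul (by rw [Matrix.smul_mul, hv₁, smul_smul])
  rw [Matrix.mul_assoc, Matrix.mul_assoc, Matrix.sub_mul, inv_mul_of_mul_eq_smul hA₁ hv₁,
    inv_mul_of_mul_eq_smul hA₂ hv₂, ← sub_smul, Matrix.mul_smul, hexp, Matrix.mul_smul,
    Matrix.mul_assoc, inv_mul_of_mul_eq_smul hA₁ hv₁, Matrix.mul_smul, Matrix.mul_smul, hβ]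
  simp only [Matrix.smul_apply, Matrix.one_apply_eq, smul_eq_mul, mul_one]

theorem st_symmetric_duration_general (N : ℕ) (hN : 2 ≤ N)
    (σ μ τ : ℝ) (hσ : 0 < σ) (hμ : 0 < μ)
    (A₁ A₂ : Matrix (Fin (N - 1)) (Fin (N - 1)) ℝ)
    (hA₁ : A₁ = (-((N : ℝ) * σ / ((N : ℝ) - 1))) •
        ((1 : Matrix (Fin (N - 1)) (Fin (N - 1)) ℝ) - ((1 : ℝ) / (N : ℝ)) • onesMat (N - 1)))
    (hA₂ : A₂ = A₁ - μ • (1 : Matrix (Fin (N - 1)) (Fin (N - 1)) ℝ))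
    (β₁ : Matrix (Fin 1) (Fin (N - 1)) ℝ)
    (hβ₁ : β₁ = (1 / ((N : ℝ) - 1)) • onesRow (N - 1)) :
    IsUnit A₁ ∧ IsUnit A₂ ∧
    (β₁ * NormedSpace.exp (τ • A₁) * (A₁⁻¹ - A₂⁻¹) * onesCol (N - 1)) 0 0
        - (β₁ * A₁⁻¹ * onesCol (N - 1)) 0 0
      = (1 - Real.exp (-(σ * τ) / ((N : ℝ) - 1))) * ((N : ℝ) - 1) / σ
        + Real.exp (-(σ * τ) / ((N : ℝ) - 1)) * ((N : ℝ) - 1) / (σ + μ * ((N : ℝ) - 1)) := by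
  have hK : ((N - 1 : ℕ) : ℝ) = N - 1 := by push_cast [Nat.cast_sub (by omega : 1 ≤ N)]; ring
  have hκ : 0 < (N : ℝ) - 1 := by
    have : (2 : ℝ) ≤ N := by exact_mod_cast hN
    linarith
  set κ := (N : ℝ) - 1
  have hA₁' : A₁ = (-(N * σ / κ)) • 1 + (σ / κ) • onesMat (N - 1) := by
    rw [hA₁]; match_scalars <;> field_simp
  have hA₂' : A₂ = (-(N * σ / κ) - μ) • 1 + (σ / κ) • onesMat (N - 1) := by
    rw [hA₂, hA₁', sub_smul]; abel
  have heig₁ : -(N * σ / κ) + σ / κ * (N - 1 : ℕ) = -(σ / κ) := by rw [hK]; field_simp; ring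
  have heig₂ : -(N * σ / κ) - μ + σ / κ * (N - 1 : ℕ) = -((σ + μ * κ) / κ) := by
    rw [hK]; field_simp; ring
  have hdiag : -(N * σ / κ) < 0 := by simp only [neg_lt_zero]; positivity
  have hu₁ : IsUnit A₁ := hA₁' ▸ isUnit_smul_one_add_smul_onesMat hdiag.ne
    (by rw [heig₁, neg_ne_zero]; positivity)
  have hu₂ : IsUnit A₂ := hA₂' ▸ isUnit_smul_one_add_smul_onesMat (by linarith)
    (by rw [heig₂, neg_ne_zero]; positivity)
  have hv₁ : A₁ * onesCol (N - 1) = (-(σ / κ)) • onesCol (N - 1) := by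
    rw [hA₁', smul_one_add_smul_onesMat_mul_onesCol, heig₁]
  have hv₂ : A₂ * onesCol (N - 1) = (-((σ + μ * κ) / κ)) • onesCol (N - 1) := by
    rw [hA₂', smul_one_add_smul_onesMat_mul_onesCol, heig₂]
  have hβ : β₁ * onesCol (N - 1) = 1 := by
    rw [hβ₁, Matrix.smul_mul, onesRow_mul_onesCol, smul_smul, hK, one_div,
      inv_mul_cancel₀ hκ.ne', one_smul]
  refine ⟨hu₁, hu₂, ?_⟩
  rw [exp_inv_sub_inv_entry_of_mul_eq_smul τ hu₁ hu₂ hv₁ hv₂ hβ,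
    show τ * -(σ / κ) = -(σ * τ) / κ by ring]
  field_simp
  ring

/-- Expected out-of-sync duration of a cycle for the ST policy on a symmetric
`N`-state source. -/
theorem st_symmetric_duration (N : ℕ) (hN : 2 ≤ N)
    (σ μ τ : ℝ) (hσ : 0 < σ) (hμ : 0 < μ) (hτ : 0 ≤ τ)
    (A₁ A₂ : Matrix (Fin (N - 1)) (Fin (N - 1)) ℝ)
    (hA₁ : A₁ = (-((N : ℝ) * σ / ((N : ℝ) - 1))) •
        ((1 : Matrix (Fin (N - 1)) (Fin (N - 1)) ℝ) - ((1 : ℝ) / (N : ℝ)) • onesMat (N - 1)))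
    (hA₂ : A₂ = A₁ - μ • (1 : Matrix (Fin (N - 1)) (Fin (N - 1)) ℝ))
    (β₁ : Matrix (Fin 1) (Fin (N - 1)) ℝ)
    (hβ₁ : β₁ = (1 / ((N : ℝ) - 1)) • onesRow (N - 1)) :
    IsUnit A₁ ∧ IsUnit A₂ ∧
    (β₁ * NormedSpace.exp (τ • A₁) * (A₁⁻¹ - A₂⁻¹) * onesCol (N - 1)) 0 0
        - (β₁ * A₁⁻¹ * onesCol (N - 1)) 0 0
      = (1 - Real.exp (-(σ * τ) / ((N : ℝ) - 1))) * ((N : ℝ) - 1) / σ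
        + Real.exp (-(σ * τ) / ((N : ℝ) - 1)) * ((N : ℝ) - 1) / (σ + μ * ((N : ℝ) - 1)) :=
  st_symmetric_duration_general N hN σ μ τ hσ hμ A₁ A₂ hA₁ hA₂ β₁ hβ₁
end
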